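/- arXiv:2110.14498 — 8 statements merged into one kernel-verified Lean document; each statement's English description precedes it below -/
import Mathlib

section
/- Let G be a cluster graph (disjoint union of cliques) with cliques K_1,...,K_ℓ sorted so that |K_1| is largest, let c be an integer and B = (b_1,...,b_c) budgets sorted in non-increasing order. If G admits a proper coloring φ with |φ^{-1}(i)| ≤ b_i for all i, then G admits such a coloring in which the vertices of K_1 are colored exactly with the colors 1,...,|K_1| (the |K_1| colors of largest budget). -/
open Finset

theorem stmt2 {V : Type*} [Fintype V] [DecidableEq V] (G : SimpleGraph V)
    (ℓ c : ℕ) (hl : 0 < ℓ) (K : Fin ℓ → Finset V)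
    (hpart : ∀ v, ∃! i, v ∈ K i)
    (hadj : ∀ u v, G.Adj u v ↔ u ≠ v ∧ ∃ i, u ∈ K i ∧ v ∈ K i)
    (hsorted : ∀ i j : Fin ℓ, i ≤ j → (K j).card ≤ (K i).card)
    (b : Fin c → ℕ) (hb : ∀ i j : Fin c, i ≤ j → b j ≤ b i)
    (hex : ∃ φ : V → Fin c, (∀ u v, G.Adj u v → φ u ≠ φ v) ∧
      ∀ i, (univ.filter fun v => φ v = i).card ≤ b i) :
    ∃ φ : V → Fin c, (∀ u v, G.Adj u v → φ u ≠ φ v) ∧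
      (∀ i, (univ.filter fun v => φ v = i).card ≤ b i) ∧
      (K ⟨0, hl⟩).image φ =
        univ.filter fun i : Fin c => (i : ℕ) < (K ⟨0, hl⟩).card := by
  classical
  choose idx h1 h2 using hpart
  set k0 : Fin ℓ := ⟨0, hl⟩ with hk0
  have hmemK0 : ∀ v, v ∈ K k0 ↔ idx v = k0 := fun v =>
    ⟨fun h => (h2 v k0 h).symm, fun h => h ▸ h1 v⟩
  have hAdj' : ∀ x y, G.Adj x y ↔ x ≠ y ∧ idx x = idx y := by
    intro x y
    rw [hadj]
    constructor
    · rintro ⟨hne, i, hx, hy⟩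
      exact ⟨hne, (h2 x i hx).symm.trans (h2 y i hy)⟩
    · rintro ⟨hne, hid⟩
      exact ⟨hne, idx x, h1 x, hid ▸ h1 y⟩
  have hinj : ∀ φ : V → Fin c, (∀ u v, G.Adj u v → φ u ≠ φ v) →
      ∀ x y, φ x = φ y → idx x = idx y → x = y := by
    intro φ hp x y hφ hid
    by_contra hne
    exact hp x y ((hAdj' x y).2 ⟨hne, hid⟩) hφ
  obtain ⟨φ, hφS, hmin⟩ := Finset.exists_min_image
    (univ.filter fun ψ : V → Fin c =>
      (∀ u v, G.Adj u v → ψ u ≠ ψ v) ∧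
      ∀ i, (univ.filter fun v => ψ v = i).card ≤ b i)
    (fun ψ => ∑ w ∈ K k0, ((ψ w : ℕ)))
    (by obtain ⟨ψ, ha, hc⟩ := hex; exact ⟨ψ, mem_filter.2 ⟨mem_univ _, ha, hc⟩⟩)
  obtain ⟨-, hprop, hbud⟩ := mem_filter.1 hφS
  refine ⟨φ, hprop, hbud, ?_⟩
  by_contra hne
  have himinj : ∀ x ∈ K k0, ∀ y ∈ K k0, φ x = φ y → x = y := by
    intro x hx y hy h
    exact hinj φ hprop x y h (((hmemK0 x).1 hx).trans ((hmemK0 y).1 hy).symm)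
  have himcard : ((K k0).image φ).card = (K k0).card :=
    card_image_of_injOn himinj
  have hmc : (K k0).card ≤ c := by
    calc (K k0).card = ((K k0).image φ).card := himcard.symm
    _ ≤ (univ : Finset (Fin c)).card := card_le_card (subset_univ _)
    _ = c := by simp
  have htcard : (univ.filter fun i : Fin c => (i : ℕ) < (K k0).card).card
      = (K k0).card := by
    have hset : (univ.filter fun i : Fin c => (i : ℕ) < (K k0).card)
        = (Finset.range (K k0).card).attachFin
            (fun x hx => lt_of_lt_of_le (mem_range.1 hx) hmc) := by
      ext i
      simp [Finset.mem_attachFin]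
    rw [hset, Finset.card_attachFin, card_range]
  have hjne : (((K k0).image φ) \
      (univ.filter fun i : Fin c => (i : ℕ) < (K k0).card)).Nonempty := by
    rw [sdiff_nonempty]
    intro hsub
    exact hne (eq_of_subset_of_card_le hsub (by rw [himcard, htcard]))
  have hine : ((univ.filter fun i : Fin c => (i : ℕ) < (K k0).card) \
      ((K k0).image φ)).Nonempty := by
    rw [sdiff_nonempty]
    intro hsub
    exact hne ((eq_of_subset_of_card_le hsub (by rw [himcard, htcard])).symm)
  obtain ⟨j, hj⟩ := hjne
  obtain ⟨i, hi⟩ := hine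
  rw [mem_sdiff] at hj hi
  obtain ⟨hjim, hjt⟩ := hj
  obtain ⟨hit, hiim⟩ := hi
  simp only [mem_filter, mem_univ, true_and] at hjt hit
  rw [not_lt] at hjt
  obtain ⟨v, hvK0, hφv⟩ := mem_image.1 hjim
  have hKi : ∀ w ∈ K k0, φ w ≠ i := fun w hw h => hiim (mem_image.2 ⟨w, hw, h⟩)
  have hijv : (i : ℕ) < (j : ℕ) := lt_of_lt_of_le hit hjt
  have hij : i ≠ j := fun h => lt_irrefl _ (h ▸ hijv)
  have hile : i ≤ j := Fin.le_def.2 hijv.le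
  have hidv : idx v = k0 := (hmemK0 v).1 hvK0
  have hcontra : ∀ ψ : V → Fin c, (∀ u w, G.Adj u w → ψ u ≠ ψ w) →
      (∀ k, (univ.filter fun w => ψ w = k).card ≤ b k) →
      (∑ w ∈ K k0, ((ψ w : ℕ))) < (∑ w ∈ K k0, ((φ w : ℕ))) → False := by
    intro ψ hp hbd hlt
    exact absurd (hmin ψ (mem_filter.2 ⟨mem_univ _, hp, hbd⟩)) (not_le.2 hlt)
  by_cases hcap : (univ.filter fun w => φ w = i).card < b i
  · -- Case A: recolor v with color i
    set φ' := Function.update φ v i with hφ'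
    have hpv : φ' v = i := Function.update_self v i φ
    have hpo : ∀ w, w ≠ v → φ' w = φ w := fun w hw => Function.update_of_ne hw i φ
    have hp' : ∀ x y, G.Adj x y → φ' x ≠ φ' y := by
      intro x y hxy heq
      obtain ⟨hnexy, hid⟩ := (hAdj' x y).1 hxy
      by_cases hx : v = x
      · subst hx
        have hyv : y ≠ v := hnexy.symm
        rw [hpv, hpo y hyv] at heq
        have hyK0 : y ∈ K k0 := (hmemK0 y).2 (hid.symm.trans hidv)
        exact hKi y hyK0 heq.symm
      · by_cases hy : v = y
        · subst hy
          rw [hpv, hpo x (fun h => hx h.symm)] at heq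
          have hxK0 : x ∈ K k0 := (hmemK0 x).2 (hid.trans hidv)
          exact hKi x hxK0 heq
        · rw [hpo x (fun h => hx h.symm), hpo y (fun h => hy h.symm)] at heq
          exact hprop x y hxy heq
    have hbd' : ∀ k, (univ.filter fun w => φ' w = k).card ≤ b k := by
      intro k
      by_cases hk : i = k
      · subst hk
        have hset : (univ.filter fun w => φ' w = i)
            = insert v (univ.filter fun w => φ w = i) := by
          ext w
          simp only [mem_filter, mem_univ, true_and, mem_insert]
          constructor
          · intro h
            by_cases hw : w = v
            · exact Or.inl hw
            · exact Or.inr (by rw [← hpo w hw]; exact h)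
          · rintro (h | h)
            · rw [h]; exact hpv
            · by_cases hw : w = v
              · rw [hw]; exact hpv
              · rw [hpo w hw]; exact h
        have hvnot : v ∉ (univ.filter fun w => φ w = i) := by
          simp only [mem_filter, mem_univ, true_and, hφv]
          exact fun h => hij h.symm
        rw [hset, card_insert_of_notMem hvnot]
        omega
      · by_cases hkj : j = k
        · subst hkj
          refine le_trans (card_le_card ?_) (hbud j)
          intro w hw
          simp only [mem_filter, mem_univ, true_and] at hw ⊢
          by_cases hwv : w = v
          · rw [hwv] at hw; rw [hpv] at hw; exact absurd hw hij
          · rw [← hpo w hwv]; exact hw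
        · have hset : (univ.filter fun w => φ' w = k)
              = (univ.filter fun w => φ w = k) := by
            ext w
            simp only [mem_filter, mem_univ, true_and]
            by_cases hwv : w = v
            · rw [hwv, hpv, hφv]
              exact ⟨fun h => absurd h hk, fun h => absurd h hkj⟩
            · rw [hpo w hwv]
          rw [hset]
          exact hbud k
    have hW : (∑ w ∈ K k0, ((φ' w : ℕ))) < ∑ w ∈ K k0, ((φ w : ℕ)) := by
      rw [← Finset.add_sum_erase _ (fun w => ((φ' w : ℕ))) hvK0,
          ← Finset.add_sum_erase _ (fun w => ((φ w : ℕ))) hvK0]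
      have heqsum : ∑ w ∈ (K k0).erase v, ((φ' w : ℕ))
          = ∑ w ∈ (K k0).erase v, ((φ w : ℕ)) :=
        Finset.sum_congr rfl fun w hw => by rw [hpo w (ne_of_mem_erase hw)]
      rw [heqsum, hpv, hφv]
      omega
    exact hcontra φ' hp' hbd' hW
  · -- Case B: swap v with a suitable vertex u of color i
    push_neg at hcap
    have hsj : (univ.filter fun w => φ w = j).card
        ≤ (univ.filter fun w => φ w = i).card :=
      le_trans (hbud j) (le_trans (hb i j hile) hcap)
    have hvCj : v ∈ univ.filter fun w => φ w = j := mem_filter.2 ⟨mem_univ _, hφv⟩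
    have hexu : ∃ u ∈ univ.filter fun w => φ w = i,
        ∀ w ∈ (univ.filter fun w => φ w = j).erase v, idx w ≠ idx u := by
      by_contra hcon
      push_neg at hcon
      have hsub : (univ.filter fun w => φ w = i).image idx ⊆
          ((univ.filter fun w => φ w = j).erase v).image idx := by
        intro a ha
        obtain ⟨u, hu, rfl⟩ := mem_image.1 ha
        obtain ⟨w, hw, hwe⟩ := hcon u hu
        exact mem_image.2 ⟨w, hw, hwe⟩
      have hinjCi : ∀ x ∈ (univ.filter fun w => φ w = i),
          ∀ y ∈ (univ.filter fun w => φ w = i), idx x = idx y → x = y := by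
        intro x hx y hy h
        exact hinj φ hprop x y
          (((mem_filter.1 hx).2).trans ((mem_filter.1 hy).2).symm) h
      have h1' : ((univ.filter fun w => φ w = i).image idx).card
          = (univ.filter fun w => φ w = i).card := card_image_of_injOn hinjCi
      have h2' := card_le_card hsub
      have h3' := Finset.card_image_le
        (s := (univ.filter fun w => φ w = j).erase v) (f := idx)
      have h4' : ((univ.filter fun w => φ w = j).erase v).card
          = (univ.filter fun w => φ w = j).card - 1 := card_erase_of_mem hvCj
      have h5' : 1 ≤ (univ.filter fun w => φ w = j).card := card_pos.2 ⟨v, hvCj⟩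
      omega
    obtain ⟨u, huCi, hu⟩ := hexu
    have hφu : φ u = i := (mem_filter.1 huCi).2
    have hune : u ≠ v := fun h => hij (by rw [← hφu, h, hφv])
    have huK0 : u ∉ K k0 := fun h => hKi u h hφu
    set σ := Equiv.swap u v with hσ
    set φ' := fun w => φ (σ w) with hφ'
    have hpu : φ' u = j := by
      simp only [hφ', hσ, Equiv.swap_apply_left]
      exact hφv
    have hpv : φ' v = i := by
      simp only [hφ', hσ, Equiv.swap_apply_right]
      exact hφu
    have hpo : ∀ w, w ≠ u → w ≠ v → φ' w = φ w := fun w hw1 hw2 => by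
      simp only [hφ', hσ, Equiv.swap_apply_of_ne_of_ne hw1 hw2]
    have main : ∀ x y, x ≠ y → idx x = idx y → φ' x = φ' y → False := by
      intro x y hnexy hid heq
      by_cases hxu : u = x
      · subst hxu
        by_cases hyv : v = y
        · subst hyv
          exact huK0 ((hmemK0 u).2 (hid.trans hidv))
        · by_cases hyu : u = y
          · exact hnexy hyu
          · rw [hpu, hpo y (fun h => hyu h.symm) (fun h => hyv h.symm)] at heq
            have hyCj : y ∈ (univ.filter fun w => φ w = j).erase v :=
              mem_erase.2 ⟨fun h => hyv h.symm,
                mem_filter.2 ⟨mem_univ _, heq.symm⟩⟩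
            exact hu y hyCj hid.symm
      · by_cases hxv : v = x
        · subst hxv
          by_cases hyu : u = y
          · subst hyu
            exact huK0 ((hmemK0 u).2 (hid.symm.trans hidv))
          · by_cases hyv : v = y
            · exact hnexy hyv
            · rw [hpv, hpo y (fun h => hyu h.symm) (fun h => hyv h.symm)] at heq
              have hyK0 : y ∈ K k0 := (hmemK0 y).2 (hid.symm.trans hidv)
              exact hKi y hyK0 heq.symm
        · by_cases hyu : u = y
          · subst hyu
            rw [hpo x (fun h => hxu h.symm) (fun h => hxv h.symm), hpu] at heq
            have hxCj : x ∈ (univ.filter fun w => φ w = j).erase v :=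
              mem_erase.2 ⟨fun h => hxv h.symm,
                mem_filter.2 ⟨mem_univ _, heq⟩⟩
            exact hu x hxCj hid
          · by_cases hyv : v = y
            · subst hyv
              rw [hpo x (fun h => hxu h.symm) (fun h => hxv h.symm), hpv] at heq
              have hxK0 : x ∈ K k0 := (hmemK0 x).2 (hid.trans hidv)
              exact hKi x hxK0 heq
            · rw [hpo x (fun h => hxu h.symm) (fun h => hxv h.symm),
                hpo y (fun h => hyu h.symm) (fun h => hyv h.symm)] at heq
              exact hnexy (hinj φ hprop x y heq hid)
    have hp' : ∀ x y, G.Adj x y → φ' x ≠ φ' y := by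
      intro x y hxy heq
      obtain ⟨hnexy, hid⟩ := (hAdj' x y).1 hxy
      exact main x y hnexy hid heq
    have hbd' : ∀ k, (univ.filter fun w => φ' w = k).card ≤ b k := by
      intro k
      have hmapeq : (univ.filter fun w => φ' w = k)
          = (univ.filter fun w => φ w = k).map σ.symm.toEmbedding := by
        ext w
        simp only [mem_filter, mem_univ, true_and, mem_map,
          Equiv.coe_toEmbedding, hφ']
        constructor
        · intro h
          exact ⟨σ w, h, σ.symm_apply_apply w⟩
        · rintro ⟨a, ha, rfl⟩
          rw [σ.apply_symm_apply]
          exact ha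
      rw [hmapeq, card_map]
      exact hbud k
    have hW : (∑ w ∈ K k0, ((φ' w : ℕ))) < ∑ w ∈ K k0, ((φ w : ℕ)) := by
      rw [← Finset.add_sum_erase _ (fun w => ((φ' w : ℕ))) hvK0,
          ← Finset.add_sum_erase _ (fun w => ((φ w : ℕ))) hvK0]
      have heqsum : ∑ w ∈ (K k0).erase v, ((φ' w : ℕ))
          = ∑ w ∈ (K k0).erase v, ((φ w : ℕ)) :=
        Finset.sum_congr rfl fun w hw => by
          rw [hpo w (fun h => huK0 (h ▸ mem_of_mem_erase hw))
            (ne_of_mem_erase hw)]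
      rw [heqsum, hpv, hφv]
      omega
    exact hcontra φ' hp' hbd' hW
end

section
/- Let G be a disjoint union of cliques K_1,...,K_ℓ with |K_1| ≥ |K_2| ≥ ... ≥ |K_ℓ|, and let B = (b_1,...,b_c) with b_1 ≥ ... ≥ b_c. The greedy algorithm that processes cliques in non-increasing order of size and colors the j-th vertex of the current clique with the color of current j-th largest remaining budget (re-sorting remaining budgets after each clique, and failing if a needed budget is 0) succeeds if and only if G admits a proper coloring with each color i used at most b_i times. In particular, the budgeted coloring problem on cluster graphs is decidable in polynomial time. -/
/-!
A clique of size `s` takes `s` distinct colours of positive remaining budget. Exchanging a chosen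
colour `x` for an unchosen colour `y` of strictly larger budget only moves one unit of leftover
budget from the richer colour `y` to the poorer colour `x`, and such a transfer never destroys the
colourability of the remaining cliques. Hence, if the cliques can be coloured one after another at
all, they can be coloured with the colours of largest remaining budget at every step, which is what
the greedy algorithm does. Within a clique only the set of colours matters, and the order in which
the cliques are processed is irrelevant, so sequential colourability is the same as the existence
of a budgeted colouring.
-/

open Finset

/-- One step of the greedy algorithm: color a clique of size `s` using the `s`
largest remaining budgets (after re-sorting the budgets in non-increasing
order), failing (`none`) if one of the needed budgets is `0`. -/
def greedyStep (s : ℕ) (bs : List ℕ) : Option (List ℕ) :=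
  let sorted := bs.mergeSort (fun a b => decide (b ≤ a))
  if s ≤ sorted.length ∧ ∀ x ∈ sorted.take s, 1 ≤ x then
    some (((sorted.take s).map (fun x => x - 1)) ++ sorted.drop s)
  else none

/-- The greedy algorithm processing the list of clique sizes. -/
def greedy : List ℕ → List ℕ → Bool
  | [], _ => true
  | s :: rest, bs =>
    match greedyStep s bs with
    | some bs' => greedy rest bs'
    | none => false

section

variable {α : Type*} [DecidableEq α]

def spend (C : Finset α) (β : α → ℕ) (z : α) : ℕ := if z ∈ C then β z - 1 else β z

def FitsBudget : List ℕ → (α → ℕ) → Prop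
  | [], _ => True
  | s :: rest, β =>
    ∃ C : Finset α, #C = s ∧ (∀ x ∈ C, 0 < β x) ∧ FitsBudget rest (spend C β)

theorem FitsBudget.swap {a b : ℕ} {rest : List ℕ} {β : α → ℕ}
    (h : FitsBudget (a :: b :: rest) β) : FitsBudget (b :: a :: rest) β := by
  obtain ⟨C, hC, hCpos, D, hD, hDpos, hrest⟩ := h
  have hcomm : spend C (spend D β) = spend D (spend C β) := by
    funext z; simp only [spend]; split_ifs <;> omega
  refine ⟨D, hD, fun x hx => ?_, C, hC, fun x hx => ?_, hcomm ▸ hrest⟩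
  · have := hDpos x hx
    simp only [spend] at this; split_ifs at this <;> omega
  · have := hCpos x hx
    by_cases hxD : x ∈ D
    · have := hDpos x hxD
      simp only [spend, hx, hxD, if_true] at this ⊢; omega
    · simpa [spend, hxD] using this

theorem FitsBudget.perm {S S' : List ℕ} (h : S.Perm S') {β : α → ℕ} :
    FitsBudget S β → FitsBudget S' β := by
  induction h generalizing β with
  | nil => exact id
  | cons s _ ih => exact fun ⟨C, hC, hpos, hrest⟩ => ⟨C, hC, hpos, ih hrest⟩
  | swap a b rest => exact FitsBudget.swap
  | trans _ _ ih₁ ih₂ => exact ih₂ ∘ ih₁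

theorem fitsBudget_ofFn_iff {n : ℕ} (s : Fin n → ℕ) (β : α → ℕ) :
    FitsBudget (List.ofFn s) β ↔
      ∃ D : Fin n → Finset α, (∀ i, #(D i) = s i) ∧ ∀ j, #{i | j ∈ D i} ≤ β j := by
  induction n generalizing β with
  | zero => simp [FitsBudget]
  | succ n ih =>
    simp only [List.ofFn_succ, FitsBudget, ih, Fin.forall_fin_succ, Fin.card_filter_univ_succ']
    constructor
    · rintro ⟨C, hC, hpos, D, hD, hcount⟩
      refine ⟨Fin.cons C D, by simpa using ⟨hC, hD⟩, fun j => ?_⟩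
      have hj := hcount j
      simp only [spend, Fin.cons_zero, Fin.cons_succ] at hj ⊢
      by_cases hjC : j ∈ C
      · have := hpos j hjC
        simp only [hjC, if_true] at hj ⊢; omega
      · simp only [hjC, if_false] at hj ⊢; omega
    · rintro ⟨D, ⟨hD0, hD⟩, hcount⟩
      refine ⟨D 0, hD0, fun x hx => ?_, fun i => D i.succ, hD, fun j => ?_⟩
      · have := hcount x; simp only [hx, if_true] at this; omega
      · have := hcount j; simp only [spend]; split_ifs at this ⊢ <;> omega

theorem FitsBudget.transfer {S : List ℕ} {β β' : α → ℕ} {x y : α} (h : FitsBudget S β)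
    (hxy : x ≠ y) (hgap : β x + 2 ≤ β y) (hx : β' x = β x + 1) (hy : β' y + 1 = β y)
    (hβ' : ∀ z, z ≠ x → z ≠ y → β' z = β z) : FitsBudget S β' := by
  induction S generalizing β β' with
  | nil => trivial
  | cons s rest ih =>
    obtain ⟨C, hC, hpos, hrest⟩ := h
    by_cases hswap : y ∈ C ∧ x ∉ C
    · refine ⟨insert x (C.erase y), ?_, fun z hz => ?_, ?_⟩
      · rw [card_insert_of_notMem (fun h => hswap.2 (mem_of_mem_erase h)),
          card_erase_of_mem hswap.1, hC]
        have := card_pos.2 ⟨y, hswap.1⟩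
        omega
      · rcases mem_insert.1 hz with rfl | hz
        · omega
        · rw [hβ' z (fun h => hswap.2 (h ▸ mem_of_mem_erase hz)) (ne_of_mem_erase hz)]
          exact hpos z (mem_of_mem_erase hz)
      · convert hrest using 1
        funext z
        simp only [spend, mem_insert, mem_erase]
        rcases eq_or_ne z x with rfl | hzx
        · simp [hswap.2, hx]
        rcases eq_or_ne z y with rfl | hzy
        · simp [hswap.1, hzx]; omega
        · simp [hzx, hzy, hβ' z hzx hzy]
    · have hxC_of_hyC : y ∈ C → x ∈ C := by tauto
      refine ⟨C, hC, fun z hz => ?_, ih hrest ?_ ?_ ?_ ?_⟩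
      · rcases eq_or_ne z x with rfl | hzx
        · omega
        rcases eq_or_ne z y with rfl | hzy
        · omega
        · rw [hβ' z hzx hzy]; exact hpos z hz
      · by_cases hyC : y ∈ C
        · have := hpos x (hxC_of_hyC hyC)
          simp only [spend, hxC_of_hyC hyC, hyC, if_true]; omega
        · simp only [spend, hyC, if_false]; split_ifs <;> omega
      · by_cases hxC : x ∈ C
        · have := hpos x hxC
          simp only [spend, hxC, if_true]; omega
        · simp only [spend, hxC, if_false]; omega
      · simp only [spend]; split_ifs <;> omega
      · intro z hzx hzy
        simp only [spend, hβ' z hzx hzy]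

def IsTopSet (β : α → ℕ) (C : Finset α) : Prop := ∀ x ∈ C, ∀ y ∉ C, β y ≤ β x

section Fintype
variable [Fintype α]

theorem univ_val_eq_add_compl (C : Finset α) : (univ : Finset α).val = C.val + Cᶜ.val := by
  rw [← disjUnion_val C Cᶜ disjoint_compl_right, disjUnion_eq_union, union_compl]

theorem exists_isTopSet (β : α → ℕ) {s : ℕ} (hs : s ≤ Fintype.card α) :
    ∃ C, IsTopSet β C ∧ #C = s := by
  induction s with
  | zero => exact ⟨∅, by simp [IsTopSet], rfl⟩
  | succ s ih =>
    obtain ⟨C, hC, rfl⟩ := ih (by omega)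
    have hne : Cᶜ.Nonempty := by
      rw [← card_pos, card_compl]; omega
    obtain ⟨y, hy, hmax⟩ := Cᶜ.exists_max_image β hne
    rw [mem_compl] at hy
    refine ⟨insert y C, fun x hx z hz => ?_, card_insert_of_notMem hy⟩
    rw [mem_insert, not_or] at hz
    rcases mem_insert.1 hx with rfl | hx
    · exact hmax z (mem_compl.2 hz.2)
    · exact hC x hx z hz.2

theorem FitsBudget.exists_isTopSet {s : ℕ} {rest : List ℕ} {β : α → ℕ}
    (h : FitsBudget (s :: rest) β) :
    ∃ C, IsTopSet β C ∧ #C = s ∧ (∀ x ∈ C, 0 < β x) ∧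
      FitsBudget rest (spend C β) := by
  classical
  obtain ⟨C₀, hC₀⟩ := h
  obtain ⟨C, hC, hmax⟩ := (univ.filter fun C : Finset α =>
      #C = s ∧ (∀ x ∈ C, 0 < β x) ∧ FitsBudget rest (spend C β)).exists_max_image
    (fun C => ∑ x ∈ C, β x) ⟨C₀, mem_filter.2 ⟨mem_univ _, hC₀⟩⟩
  obtain ⟨hcard, hpos, hrest⟩ := (mem_filter.1 hC).2
  refine ⟨C, fun x hx y hy => ?_, hcard, hpos, hrest⟩
  by_contra! hlt
  have hxy : x ≠ y := fun h => hy (h ▸ hx)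
  have hy' : y ∉ C.erase x := fun h => hy (mem_of_mem_erase h)
  have hx' : x ∉ insert y (C.erase x) := by simp [hxy]
  have hpx := hpos x hx
  have hexchange : FitsBudget rest (spend (insert y (C.erase x)) β) := by
    refine hrest.transfer hxy ?_ ?_ ?_ fun z hzx hzy => ?_
    · simp only [spend, hx, hy, if_true, if_false]; omega
    · simp only [spend, hx, hx', if_true, if_false]; omega
    · simp only [spend, hy, mem_insert_self, if_true, if_false]; omega
    · simp [spend, hzx, hzy]
  have hmem := hmax (insert y (C.erase x)) <| mem_filter.2 ⟨mem_univ _, by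
    rw [card_insert_of_notMem hy', card_erase_of_mem hx, ← hcard]
    exact Nat.sub_add_cancel (card_pos.2 ⟨x, hx⟩), ?_, hexchange⟩
  · rw [sum_insert hy', ← add_sum_erase C β hx] at hmem
    omega
  · intro z hz
    rcases mem_insert.1 hz with rfl | hz
    · omega
    · exact hpos z (mem_of_mem_erase hz)

theorem sort_map_eq_of_isTopSet {β : α → ℕ} {C : Finset α} (hC : IsTopSet β C) :
    (univ.val.map β).sort (· ≥ ·) =
      (C.val.map β).sort (· ≥ ·) ++ (Cᶜ.val.map β).sort (· ≥ ·) := by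
  refine List.Perm.eq_of_pairwise' (r := (· ≥ ·)) (Multiset.pairwise_sort _ _) ?_ ?_
  · refine List.pairwise_append.2 ⟨Multiset.pairwise_sort _ _, Multiset.pairwise_sort _ _, ?_⟩
    simp only [Multiset.mem_sort, Multiset.mem_map, mem_val, mem_compl]
    rintro _ ⟨x, hx, rfl⟩ _ ⟨y, hy, rfl⟩
    exact hC x hx y hy
  · rw [← Multiset.coe_eq_coe, ← Multiset.coe_add, Multiset.sort_eq, Multiset.sort_eq,
      Multiset.sort_eq, ← Multiset.map_add, univ_val_eq_add_compl]

theorem greedyStep_of_isTopSet {L : List ℕ} {β : α → ℕ} {C : Finset α}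
    (hL : (L : Multiset ℕ) = univ.val.map β) (hC : IsTopSet β C) :
    ∃ L' : List ℕ, (L' : Multiset ℕ) = univ.val.map (spend C β) ∧
      greedyStep #C L = if ∀ x ∈ C, 0 < β x then some L' else none := by
  set top := (C.val.map β).sort (· ≥ ·)
  have hsorted :
      L.mergeSort (fun a b => decide (b ≤ a)) = top ++ (Cᶜ.val.map β).sort (· ≥ ·) := by
    rw [← sort_map_eq_of_isTopSet hC, ← hL]
    rfl
  have hlen : top.length = #C := by simp [top]
  refine ⟨top.map (· - 1) ++ (Cᶜ.val.map β).sort (· ≥ ·), ?_, ?_⟩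
  · rw [← Multiset.coe_add, Multiset.sort_eq, ← Multiset.map_coe, Multiset.sort_eq,
      Multiset.map_map, univ_val_eq_add_compl C, Multiset.map_add]
    congr 1 <;> refine Multiset.map_congr rfl fun z hz => ?_
    · rw [mem_val] at hz
      simp [spend, hz]
    · rw [mem_val, mem_compl] at hz
      simp [spend, hz]
  · simp only [greedyStep, hsorted, List.take_left' hlen, List.drop_left' hlen]
    congr 1
    simp [top, card_le_univ, Nat.one_le_iff_ne_zero, Nat.pos_iff_ne_zero]

theorem greedy_eq_true_iff_fitsBudget (S : List ℕ) {L : List ℕ} {β : α → ℕ}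
    (hL : (L : Multiset ℕ) = univ.val.map β) : greedy S L = true ↔ FitsBudget S β := by
  induction S generalizing L β with
  | nil => simp [greedy, FitsBudget]
  | cons s rest ih =>
    constructor
    · intro h
      have hs : s ≤ Fintype.card α := by
        by_contra! hs
        have hlen : L.length = Fintype.card α := by
          simpa using congrArg Multiset.card hL
        have hnone : greedyStep s L = none := by
          simp only [greedyStep, List.length_mergeSort, hlen]
          rw [if_neg (by omega)]
        simp [greedy, hnone] at h
      obtain ⟨C, hC, rfl⟩ := exists_isTopSet β hs
      obtain ⟨L', hL', hstep⟩ := greedyStep_of_isTopSet hL hC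
      rw [greedy, hstep] at h
      split_ifs at h with hpos
      · exact ⟨C, rfl, hpos, (ih hL').1 h⟩
    · intro h
      obtain ⟨C, hC, rfl, hpos, hrest⟩ := h.exists_isTopSet
      obtain ⟨L', hL', hstep⟩ := greedyStep_of_isTopSet hL hC
      rw [greedy, hstep, if_pos hpos]
      exact (ih hL').2 hrest

end Fintype

theorem exists_budgetedColoring_iff {V ι : Type*} [Fintype V] [Fintype ι] (G : SimpleGraph V)
    (K : ι → Finset V) (hpart : ∀ v, ∃! i, v ∈ K i)
    (hadj : ∀ u v, G.Adj u v ↔ u ≠ v ∧ ∃ i, u ∈ K i ∧ v ∈ K i) (b : α → ℕ) :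
    (∃ φ : V → α, (∀ u v, G.Adj u v → φ u ≠ φ v) ∧ ∀ j, #{v | φ v = j} ≤ b j) ↔
      ∃ D : ι → Finset α, (∀ i, #(D i) = #(K i)) ∧ ∀ j, #{i | j ∈ D i} ≤ b j := by
  choose part hpart_mem hpart_unique using hpart
  constructor
  · rintro ⟨φ, hproper, hbudget⟩
    have hinj : ∀ i, Set.InjOn φ (K i) := fun i u hu v hv huv => by
      by_contra hne
      exact hproper u v ((hadj u v).2 ⟨hne, i, hu, hv⟩) huv
    refine ⟨fun i => (K i).image φ, fun i => card_image_of_injOn (hinj i),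
      fun j => (hbudget j).trans' <| card_le_card_of_surjOn part fun i hi => ?_⟩
    obtain ⟨v, hv, rfl⟩ := mem_image.1 (mem_filter.1 hi).2
    exact ⟨v, mem_filter.2 ⟨mem_univ _, rfl⟩, (hpart_unique v i hv).symm⟩
  · rintro ⟨D, hcard, hbudget⟩
    let e i : K i ≃ D i := equivOfCardEq (hcard i).symm
    let φ v : α := e (part v) ⟨v, hpart_mem v⟩
    have hφ : ∀ i v (hv : v ∈ K i), φ v = e i ⟨v, hv⟩ := by
      intro i v hv
      obtain rfl := hpart_unique v i hv
      rfl
    have hinj : ∀ i, Set.InjOn φ (K i) := by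
      intro i u hu v hv huv
      rw [hφ i u hu, hφ i v hv] at huv
      simpa using (e i).injective (Subtype.ext huv)
    refine ⟨φ, fun u v huv h => ?_, fun j => (hbudget j).trans' ?_⟩
    · obtain ⟨hne, i, hu, hv⟩ := (hadj u v).1 huv
      exact hne (hinj i hu hv h)
    refine card_le_card_of_injOn part (fun v hv => ?_) fun u hu v hv huv => ?_
    · rw [mem_coe, mem_filter] at hv ⊢
      exact ⟨mem_univ _, hv.2 ▸ (e (part v) ⟨v, hpart_mem v⟩).2⟩
    · rw [mem_coe, mem_filter] at hu hv
      exact hinj (part u) (hpart_mem u) (huv ▸ hpart_mem v) (hu.2.trans hv.2.symm)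

end

theorem stmt3_general {V : Type*} [Fintype V] (G : SimpleGraph V)
    (ℓ c : ℕ) (K : Fin ℓ → Finset V)
    (hpart : ∀ v, ∃! i, v ∈ K i)
    (hadj : ∀ u v, G.Adj u v ↔ u ≠ v ∧ ∃ i, u ∈ K i ∧ v ∈ K i)
    (b : Fin c → ℕ) :
    greedy ((List.ofFn fun i => (K i).card).mergeSort (fun a b => decide (b ≤ a)))
        (List.ofFn b) = true ↔
      ∃ φ : V → Fin c, (∀ u v, G.Adj u v → φ u ≠ φ v) ∧
        ∀ i, (univ.filter fun v => φ v = i).card ≤ b i := by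
  rw [greedy_eq_true_iff_fitsBudget _ (Fin.univ_val_map b).symm,
    exists_budgetedColoring_iff G K hpart hadj, ← fitsBudget_ofFn_iff]
  have hsort := List.mergeSort_perm (List.ofFn fun i => #(K i)) (fun a b => decide (b ≤ a))
  exact ⟨FitsBudget.perm hsort, FitsBudget.perm hsort.symm⟩

theorem stmt3 {V : Type*} [Fintype V] [DecidableEq V] (G : SimpleGraph V)
    (ℓ c : ℕ) (K : Fin ℓ → Finset V)
    (hpart : ∀ v, ∃! i, v ∈ K i)
    (hadj : ∀ u v, G.Adj u v ↔ u ≠ v ∧ ∃ i, u ∈ K i ∧ v ∈ K i)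
    (b : Fin c → ℕ) :
    greedy ((List.ofFn fun i => (K i).card).mergeSort (fun a b => decide (b ≤ a)))
        (List.ofFn b) = true ↔
      ∃ φ : V → Fin c, (∀ u v, G.Adj u v → φ u ≠ φ v) ∧
        ∀ i, (univ.filter fun v => φ v = i).card ≤ b i :=
  stmt3_general G ℓ c K hpart hadj b
end

section
/- Let S = {x_1,...,x_{3c}} be a multiset of positive integers summing to cw, let n = Σ x_i, and let G be the complete c-partite graph in which each of the c parts has exactly 3n + w vertices. Then G admits a proper coloring with 3c colors where color i is used at most n + x_i times, if and only if S can be partitioned into c triples each summing to w. -/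
/-!
In a proper colouring of a complete multipartite graph every colour class lies inside one part.
The bounds `n + x i` add up to exactly the number `c * (3 * n + w)` of vertices, so every class
has exactly `n + x i` vertices; in particular each colour sits in a well-defined part. A part
receiving `k` colours whose `x`-values sum to `s` then has `k * n + s = 3 * n + w` vertices, and
`k ≤ s ≤ n`, `0 < w ≤ n` force `k = 3`, `s = w`. Conversely, a 3-partition tells each part how to
cut its `3 * n + w` vertices into blocks of sizes `n + x i`.
-/

open Finset

section Multipartite

variable {ι α κ : Type*}

lemma exists_comp_eq_fst_of_surjective {φ : ι × α → κ} (hφ : ∀ p q, p.1 ≠ q.1 → φ p ≠ φ q)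
    (hsurj : Function.Surjective φ) : ∃ T : κ → ι, ∀ p, T (φ p) = p.1 := by
  choose rep hrep using hsurj
  refine ⟨fun k => (rep k).1, fun p => ?_⟩
  by_contra h
  exact hφ _ _ h (hrep (φ p))

lemma card_eq_sum_card_fiber_of_comp_eq_fst [Fintype ι] [Fintype α] [Fintype κ] [DecidableEq ι]
    [DecidableEq κ] {φ : ι × α → κ} {T : κ → ι} (hT : ∀ p, T (φ p) = p.1) (j : ι) :
    Fintype.card α = ∑ k with T k = j, #{p | φ p = k} := by
  have hpart : #{p : ι × α | T (φ p) = j} = Fintype.card α := by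
    have : ({p : ι × α | p.1 = j} : Finset _) = {j} ×ˢ univ := by ext ⟨i, a⟩; simp [eq_comm]
    simp only [hT, this, card_product, card_singleton, card_univ, one_mul]
  rw [← hpart, card_eq_sum_card_fiberwise (f := φ) (t := {k | T k = j})
    (fun p hp => by simpa using hp)]
  refine sum_congr rfl fun k hk => ?_
  rw [filter_filter]
  congr 1
  ext p
  simp only [mem_filter, mem_univ, true_and] at hk ⊢
  exact ⟨And.right, fun h => ⟨h ▸ hk, h⟩⟩

lemma exists_comp_eq_fst_of_sum_eq_card [Fintype ι] [Fintype α] [Fintype κ] [DecidableEq ι]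
    [DecidableEq κ] (T : κ → ι) (m : κ → ℕ)
    (hm : ∀ j, ∑ k with T k = j, m k = Fintype.card α) :
    ∃ φ : ι × α → κ, (∀ p, T (φ p) = p.1) ∧ ∀ k, #{p | φ p = k} = m k := by
  have e : ∀ j, α ≃ Σ k : {k // T k = j}, Fin (m k) := fun j =>
    Fintype.equivOfCardEq (by
      simp only [Fintype.card_sigma, Fintype.card_fin, ← hm j]
      exact sum_subtype _ (by simp) m)
  let E : ι × α ≃ Σ k, Fin (m k) :=
    (Equiv.sigmaEquivProd ι α).symm.trans <| (Equiv.sigmaCongrRight e).trans <|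
      (Equiv.sigmaAssoc fun j (k : {k // T k = j}) => Fin (m k)).symm.trans <|
      Equiv.sigmaCongrLeft (β := fun k => Fin (m k)) (Equiv.sigmaFiberEquiv T)
  refine ⟨fun p => (E p).1, fun p => (e p.1 p.2).1.2, fun k => ?_⟩
  rw [← Fintype.card_subtype, Fintype.card_congr ((E.subtypeEquiv fun _ => Iff.rfl).trans
    (Equiv.sigmaSubtype k)), Fintype.card_fin]

end Multipartite

lemma eq_three_of_mul_add_eq {k s n w : ℕ} (hks : k ≤ s) (hsn : s ≤ n) (hw : 0 < w)
    (hwn : w ≤ n) (h : k * n + s = 3 * n + w) : k = 3 ∧ s = w := by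
  rcases Nat.lt_or_ge k 4 with hk | hk
  · interval_cases k <;> omega
  · nlinarith

theorem stmt4 (c w : ℕ) (hc : 0 < c) (x : Fin (3 * c) → ℕ) (hx : ∀ i, 0 < x i)
    (n : ℕ) (hn : n = ∑ i, x i) (hw : n = c * w) :
    (∃ φ : Fin c × Fin (3 * n + w) → Fin (3 * c),
       (∀ p q : Fin c × Fin (3 * n + w), p.1 ≠ q.1 → φ p ≠ φ q) ∧
       (∀ i, (univ.filter fun p => φ p = i).card ≤ n + x i)) ↔
    (∃ T : Fin (3 * c) → Fin c,
       ∀ j, (univ.filter fun i => T i = j).card = 3 ∧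
         (∑ i ∈ univ.filter fun i => T i = j, x i) = w) := by
  have hn_pos : 0 < n := hn ▸ sum_pos (fun i _ => hx i) ⟨⟨0, by omega⟩, mem_univ _⟩
  have hw_pos : 0 < w := Nat.pos_of_mul_pos_left (hw ▸ hn_pos)
  have hwn : w ≤ n := hw ▸ Nat.le_mul_of_pos_left w hc
  constructor
  · rintro ⟨φ, hφ, hle⟩
    have htot : ∑ i, #{p | φ p = i} = ∑ i, (n + x i) := calc
      _ = c * (3 * n + w) := by
        rw [← card_eq_sum_card_fiberwise fun _ _ => mem_univ _]; simp
      _ = 3 * c * n + n := by rw [hw]; ring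
      _ = ∑ i, (n + x i) := by simp [sum_add_distrib, ← hn]
    have hcard : ∀ i, #{p | φ p = i} = n + x i := fun i =>
      (sum_eq_sum_iff_of_le fun i _ => hle i).1 htot i (mem_univ i)
    obtain ⟨T, hT⟩ := exists_comp_eq_fst_of_surjective hφ fun i => by
      obtain ⟨p, hp⟩ := card_pos.1 (hcard i ▸ Nat.add_pos_left hn_pos _)
      exact ⟨p, (mem_filter.1 hp).2⟩
    refine ⟨T, fun j => eq_three_of_mul_add_eq ?_ ?_ hw_pos hwn ?_⟩
    · simpa using card_nsmul_le_sum _ x 1 fun i _ => hx i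
    · exact hn ▸ sum_le_sum_of_subset (filter_subset _ _)
    · have hsize := card_eq_sum_card_fiber_of_comp_eq_fst hT j
      simp only [hcard, sum_add_distrib, sum_const, smul_eq_mul, Fintype.card_fin] at hsize
      exact hsize.symm
  · rintro ⟨T, hT⟩
    obtain ⟨φ, hTφ, hcard⟩ := exists_comp_eq_fst_of_sum_eq_card T (fun i => n + x i) fun j => by
      rw [sum_add_distrib, sum_const, smul_eq_mul, (hT j).1, (hT j).2, Fintype.card_fin]
    exact ⟨φ, fun p q hpq h => hpq (by rw [← hTφ p, ← hTφ q, h]), fun i => (hcard i).le⟩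
end

section
/- Let G be a bipartite graph whose connected components are P_1,...,P_ℓ, where component P_i has bipartition (V_1^i, V_2^i) with |V_1^i| ≥ |V_2^i|, and let y_i = |V_1^i| − |V_2^i| and x = Σ_i |V_2^i|. Then G admits a proper 2-coloring in which color 1 is used at most b_1 times and color 2 at most b_2 times if and only if b_1 ≥ x, b_2 ≥ x, and there exists a subset X ⊆ {1,...,ℓ} with Σ_{i∈X} y_i ≤ b_1 − x and Σ_{i∉X} y_i ≤ b_2 − x. -/
open Finset

lemma stmt8_fin2 : ∀ p q r : Fin 2, p ≠ q → (p = r ↔ ¬ q = r) := by decide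

lemma stmt8_bool : ∀ p q r : Bool, p ≠ q → (p = r ↔ ¬ q = r) := by decide

lemma stmt8_card_sigma {n : ℕ} {T : Fin n → Type*} [∀ i, Fintype (T i)]
    (f : (Σ i : Fin n, T i) → Prop) [DecidablePred f] :
    (univ.filter f).card = ∑ i, (univ.filter fun t : T i => f ⟨i, t⟩).card := by
  rw [Finset.card_filter, ← Finset.univ_sigma_univ, Finset.sum_sigma]
  exact Finset.sum_congr rfl fun i _ => (Finset.card_filter _ _).symm

lemma stmt8_card_sum_left {α β : Type*} [Fintype α] [Fintype β] [DecidableEq α] [DecidableEq β]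
    (p : α ⊕ β → Prop) [DecidablePred p]
    (h1 : ∀ a, p (Sum.inl a)) (h2 : ∀ b, ¬ p (Sum.inr b)) :
    (univ.filter p).card = Fintype.card α := by
  rw [Finset.card_filter, Fintype.sum_sum_type]
  simp [h1, h2]

lemma stmt8_card_sum_right {α β : Type*} [Fintype α] [Fintype β] [DecidableEq α] [DecidableEq β]
    (p : α ⊕ β → Prop) [DecidablePred p]
    (h1 : ∀ a, ¬ p (Sum.inl a)) (h2 : ∀ b, p (Sum.inr b)) :
    (univ.filter p).card = Fintype.card β := by
  rw [Finset.card_filter, Fintype.sum_sum_type]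
  simp [h1, h2]

theorem stmt8 (ℓ : ℕ) (a d : Fin ℓ → ℕ) (had : ∀ i, d i ≤ a i)
    (G : SimpleGraph (Σ i : Fin ℓ, Fin (a i) ⊕ Fin (d i)))
    -- every edge stays inside a component and joins the two sides
    (hadj : ∀ x y, G.Adj x y → x.1 = y.1 ∧
      ((x.2.isLeft = true ∧ y.2.isRight = true) ∨
        (x.2.isRight = true ∧ y.2.isLeft = true)))
    -- each component is connected
    (hconn : ∀ (i : Fin ℓ) (x y : Fin (a i) ⊕ Fin (d i)),
      G.Reachable ⟨i, x⟩ ⟨i, y⟩)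
    (b1 b2 x : ℕ) (hx : x = ∑ i, d i) :
    (∃ φ : (Σ i : Fin ℓ, Fin (a i) ⊕ Fin (d i)) → Fin 2,
      (∀ u v, G.Adj u v → φ u ≠ φ v) ∧
      (univ.filter fun v => φ v = 0).card ≤ b1 ∧
      (univ.filter fun v => φ v = 1).card ≤ b2) ↔
    (x ≤ b1 ∧ x ≤ b2 ∧ ∃ X : Finset (Fin ℓ),
      (∑ i ∈ X, (a i - d i)) ≤ b1 - x ∧
      (∑ i ∈ Xᶜ, (a i - d i)) ≤ b2 - x) := by
  classical
  constructor
  · rintro ⟨φ, hproper, h0, h1⟩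
    -- colors alternate along walks with sides
    have key : ∀ u v, G.Reachable u v → (φ u = φ v ↔ u.2.isLeft = v.2.isLeft) := by
      intro u v h
      obtain ⟨w⟩ := h
      induction w with
      | nil => simp
      | @cons u w' v h p ih =>
        have hside := (hadj _ _ h).2
        have hne : φ u ≠ φ w' := hproper _ _ h
        have hsne : u.2.isLeft ≠ w'.2.isLeft := by
          rcases hside with ⟨h1', h2'⟩ | ⟨h1', h2'⟩
          · rw [h1', Sum.isLeft_eq_false.mpr h2']; simp
          · rw [Sum.isLeft_eq_false.mpr h1', h2']; simp
        rw [stmt8_fin2 _ _ _ hne, stmt8_bool _ _ v.2.isLeft hsne, not_iff_not, ih]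
    have hLL : ∀ (i : Fin ℓ) (v v' : Fin (a i)),
        φ ⟨i, Sum.inl v⟩ = φ ⟨i, Sum.inl v'⟩ := fun i v v' =>
      (key _ _ (hconn i _ _)).2 rfl
    have hLR : ∀ (i : Fin ℓ) (v : Fin (a i)) (w : Fin (d i)),
        φ ⟨i, Sum.inl v⟩ ≠ φ ⟨i, Sum.inr w⟩ := by
      intro i v w h
      have := (key ⟨i, Sum.inl v⟩ ⟨i, Sum.inr w⟩ (hconn i _ _)).1 h
      simp at this
    set X : Finset (Fin ℓ) := univ.filter fun i => ∀ v : Fin (a i), φ ⟨i, Sum.inl v⟩ = 0 with hXdef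
    have hone : ∀ p : Fin 2, p ≠ 0 → p = 1 := by decide
    have hcomp0 : ∀ i, ((univ.filter fun t : Fin (a i) ⊕ Fin (d i) => φ ⟨i, t⟩ = 0).card
        = if i ∈ X then a i else d i) := by
      intro i
      by_cases hi : i ∈ X
      · have hL : ∀ v : Fin (a i), φ ⟨i, Sum.inl v⟩ = 0 := by
          simpa [hXdef] using hi
        have hR : ∀ w : Fin (d i), ¬ φ ⟨i, Sum.inr w⟩ = 0 := by
          intro w h
          rcases Nat.eq_zero_or_pos (a i) with h0 | h0
          · exact absurd (lt_of_lt_of_le w.2 ((had i).trans h0.le)) (by simp)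
          · exact hLR i ⟨0, h0⟩ w ((hL _).trans h.symm)
        simp only [hi, if_pos]
        simpa using stmt8_card_sum_left (fun t : Fin (a i) ⊕ Fin (d i) => φ ⟨i, t⟩ = 0) hL hR
      · obtain ⟨v, hv⟩ : ∃ v : Fin (a i), φ ⟨i, Sum.inl v⟩ ≠ 0 := by
          by_contra hc
          push_neg at hc
          exact hi (by simp [hXdef, hc])
        have hL : ∀ v' : Fin (a i), ¬ φ ⟨i, Sum.inl v'⟩ = 0 :=
          fun v' h => hv ((hLL i v v').trans h)
        have hR : ∀ w : Fin (d i), φ ⟨i, Sum.inr w⟩ = 0 := by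
          intro w
          by_contra h
          exact hLR i v w ((hone _ hv).trans (hone _ h).symm)
        simp only [hi, if_neg, not_false_iff]
        simpa using stmt8_card_sum_right (fun t : Fin (a i) ⊕ Fin (d i) => φ ⟨i, t⟩ = 0) hL hR
    have hcomp1 : ∀ i, ((univ.filter fun t : Fin (a i) ⊕ Fin (d i) => φ ⟨i, t⟩ = 1).card
        = if i ∈ X then d i else a i) := by
      intro i
      have hsplit : ∀ t : Fin (a i) ⊕ Fin (d i), φ ⟨i, t⟩ = 1 ↔ ¬ φ ⟨i, t⟩ = 0 := by
        intro t
        constructor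
        · intro h h'; rw [h] at h'; exact absurd h' (by decide)
        · exact hone _
      by_cases hi : i ∈ X
      · have hL : ∀ v : Fin (a i), φ ⟨i, Sum.inl v⟩ = 0 := by simpa [hXdef] using hi
        have hR : ∀ w : Fin (d i), ¬ φ ⟨i, Sum.inr w⟩ = 0 := by
          intro w h
          rcases Nat.eq_zero_or_pos (a i) with h0 | h0
          · exact absurd (lt_of_lt_of_le w.2 ((had i).trans h0.le)) (by simp)
          · exact hLR i ⟨0, h0⟩ w ((hL _).trans h.symm)
        simp only [hi, if_pos]
        have := stmt8_card_sum_right (fun t : Fin (a i) ⊕ Fin (d i) => φ ⟨i, t⟩ = 1)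
          (fun v h => absurd ((hL v).symm.trans h) (by decide))
          (fun w => (hsplit _).2 (hR w))
        simpa using this
      · obtain ⟨v, hv⟩ : ∃ v : Fin (a i), φ ⟨i, Sum.inl v⟩ ≠ 0 := by
          by_contra hc
          push_neg at hc
          exact hi (by simp [hXdef, hc])
        have hL : ∀ v' : Fin (a i), φ ⟨i, Sum.inl v'⟩ = 1 :=
          fun v' => (hLL i v' v).trans (hone _ hv)
        have hR : ∀ w : Fin (d i), ¬ φ ⟨i, Sum.inr w⟩ = 1 :=
          fun w h => hLR i v w ((hL v).trans h.symm)
        simp only [hi, if_neg, not_false_iff]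
        have := stmt8_card_sum_left (fun t : Fin (a i) ⊕ Fin (d i) => φ ⟨i, t⟩ = 1) hL hR
        simpa using this
    -- card equalities
    have e0 : (univ.filter fun v => φ v = 0).card = ∑ i ∈ X, a i + ∑ i ∈ Xᶜ, d i := by
      rw [stmt8_card_sigma]
      rw [← Finset.sum_add_sum_compl X]
      congr 1
      · exact Finset.sum_congr rfl fun i hi => by rw [hcomp0 i, if_pos hi]
      · exact Finset.sum_congr rfl fun i hi => by
          rw [hcomp0 i, if_neg (Finset.mem_compl.1 hi)]
    have e1 : (univ.filter fun v => φ v = 1).card = ∑ i ∈ X, d i + ∑ i ∈ Xᶜ, a i := by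
      rw [stmt8_card_sigma]
      rw [← Finset.sum_add_sum_compl X]
      congr 1
      · exact Finset.sum_congr rfl fun i hi => by rw [hcomp1 i, if_pos hi]
      · exact Finset.sum_congr rfl fun i hi => by
          rw [hcomp1 i, if_neg (Finset.mem_compl.1 hi)]
    have hA : ∑ i ∈ X, a i = ∑ i ∈ X, (a i - d i) + ∑ i ∈ X, d i := by
      rw [← Finset.sum_add_distrib]
      exact Finset.sum_congr rfl fun i _ => (Nat.sub_add_cancel (had i)).symm
    have hB : ∑ i ∈ Xᶜ, a i = ∑ i ∈ Xᶜ, (a i - d i) + ∑ i ∈ Xᶜ, d i := by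
      rw [← Finset.sum_add_distrib]
      exact Finset.sum_congr rfl fun i _ => (Nat.sub_add_cancel (had i)).symm
    have hxsplit : ∑ i ∈ X, d i + ∑ i ∈ Xᶜ, d i = x := by
      rw [hx]; exact Finset.sum_add_sum_compl X d
    rw [e0] at h0
    rw [e1] at h1
    exact ⟨by omega, by omega, X, by omega, by omega⟩
  · rintro ⟨hb1, hb2, X, hX1, hX2⟩
    refine ⟨fun v => if ((v.1 ∈ X) ↔ v.2.isLeft = true) then 0 else 1, ?_, ?_, ?_⟩
    · intro u v h
      obtain ⟨heq, hside⟩ := hadj _ _ h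
      have hm : (u.1 ∈ X) ↔ (v.1 ∈ X) := by rw [heq]
      have hsne : u.2.isLeft ≠ v.2.isLeft := by
        rcases hside with ⟨h1', h2'⟩ | ⟨h1', h2'⟩
        · rw [h1', Sum.isLeft_eq_false.mpr h2']; simp
        · rw [Sum.isLeft_eq_false.mpr h1', h2']; simp
      have hvl : v.2.isLeft = !u.2.isLeft := by
        revert hsne; cases u.2.isLeft <;> cases v.2.isLeft <;> simp
      simp only [← heq, hvl]
      by_cases hu : u.1 ∈ X <;> cases hul : u.2.isLeft <;>
        simp [hu, hul]
    · have e0 : (univ.filter fun v : (Σ i : Fin ℓ, Fin (a i) ⊕ Fin (d i)) =>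
          (if ((v.1 ∈ X) ↔ v.2.isLeft = true) then (0 : Fin 2) else 1) = 0).card
          = ∑ i ∈ X, a i + ∑ i ∈ Xᶜ, d i := by
        rw [stmt8_card_sigma, ← Finset.sum_add_sum_compl X]
        congr 1
        · refine Finset.sum_congr rfl fun i hi => ?_
          have := stmt8_card_sum_left (fun t : Fin (a i) ⊕ Fin (d i) =>
            (if ((i ∈ X) ↔ t.isLeft = true) then (0 : Fin 2) else 1) = 0)
            (fun v => by simp [hi]) (fun w => by simp [hi])
          simpa using this
        · refine Finset.sum_congr rfl fun i hi => ?_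
          have hi' : i ∉ X := Finset.mem_compl.1 hi
          have := stmt8_card_sum_right (fun t : Fin (a i) ⊕ Fin (d i) =>
            (if ((i ∈ X) ↔ t.isLeft = true) then (0 : Fin 2) else 1) = 0)
            (fun v => by simp [hi']) (fun w => by simp [hi'])
          simpa using this
      rw [e0]
      have hA : ∑ i ∈ X, a i = ∑ i ∈ X, (a i - d i) + ∑ i ∈ X, d i := by
        rw [← Finset.sum_add_distrib]
        exact Finset.sum_congr rfl fun i _ => (Nat.sub_add_cancel (had i)).symm
      have hxsplit : ∑ i ∈ X, d i + ∑ i ∈ Xᶜ, d i = x := by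
        rw [hx]; exact Finset.sum_add_sum_compl X d
      omega
    · have e1 : (univ.filter fun v : (Σ i : Fin ℓ, Fin (a i) ⊕ Fin (d i)) =>
          (if ((v.1 ∈ X) ↔ v.2.isLeft = true) then (0 : Fin 2) else 1) = 1).card
          = ∑ i ∈ X, d i + ∑ i ∈ Xᶜ, a i := by
        rw [stmt8_card_sigma, ← Finset.sum_add_sum_compl X]
        congr 1
        · refine Finset.sum_congr rfl fun i hi => ?_
          have := stmt8_card_sum_right (fun t : Fin (a i) ⊕ Fin (d i) =>
            (if ((i ∈ X) ↔ t.isLeft = true) then (0 : Fin 2) else 1) = 1)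
            (fun v => by simp [hi]) (fun w => by simp [hi])
          simpa using this
        · refine Finset.sum_congr rfl fun i hi => ?_
          have hi' : i ∉ X := Finset.mem_compl.1 hi
          have := stmt8_card_sum_left (fun t : Fin (a i) ⊕ Fin (d i) =>
            (if ((i ∈ X) ↔ t.isLeft = true) then (0 : Fin 2) else 1) = 1)
            (fun v => by simp [hi']) (fun w => by simp [hi'])
          simpa using this
      rw [e1]
      have hB : ∑ i ∈ Xᶜ, a i = ∑ i ∈ Xᶜ, (a i - d i) + ∑ i ∈ Xᶜ, d i := by
        rw [← Finset.sum_add_distrib]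
        exact Finset.sum_congr rfl fun i _ => (Nat.sub_add_cancel (had i)).symm
      have hxsplit : ∑ i ∈ X, d i + ∑ i ∈ Xᶜ, d i = x := by
        rw [hx]; exact Finset.sum_add_sum_compl X d
      omega
end

section
/- Let P be a path on n ≥ 1 vertices and B = (b_1,...,b_c) a list of budgets with c ≥ 2 (when n ≥ 2). Then P admits a proper coloring with color i used at most b_i times if and only if Σ_{i=1}^c min(b_i, ⌈n/2⌉) ≥ n. -/
/-!
Every colour class of a proper colouring of the path is an independent set, and `v ↦ v / 2`
embeds an independent set into `{0, …, ⌈n/2⌉ - 1}`; summing over the colours gives necessity.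

Conversely, list the vertices as `0, 2, 4, …, 1, 3, 5, …` and cut this list into consecutive
blocks of lengths `min (b i) ⌈n/2⌉`, the longest block first, colouring block `i` with colour `i`.
Adjacent vertices sit `⌈n/2⌉` or `⌈n/2⌉ - 1` places apart in the list, so they could only share
a block of the full length `⌈n/2⌉` starting strictly inside the even vertices; such a block is
preceded by the first block, of the same length, which contains all the even vertices.
-/

open Finset SimpleGraph

lemma card_le_of_isIndepSet_pathGraph {n : ℕ} {s : Finset (Fin n)}
    (hs : (pathGraph n).IsIndepSet (s : Set (Fin n))) : #s ≤ (n + 1) / 2 := by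
  have hmaps : ∀ v ∈ s, v.val / 2 ∈ range ((n + 1) / 2) := fun v _ => by
    simp only [mem_range]
    omega
  have hinj : Set.InjOn (fun v : Fin n => v.val / 2) s := by
    intro u hu v hv huv
    by_contra hne
    refine hs hu hv hne (pathGraph_adj.2 ?_)
    have : u.val ≠ v.val := Fin.val_ne_of_ne hne
    simp only at huv
    omega
  simpa using card_le_card_of_injOn _ hmaps hinj

lemma le_sum_min_of_pathGraph_coloring {α : Type*} [Fintype α] [DecidableEq α] {n : ℕ}
    (b : α → ℕ) (φ : Fin n → α) (hφ : ∀ u v, (pathGraph n).Adj u v → φ u ≠ φ v)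
    (hb : ∀ a, #{v | φ v = a} ≤ b a) :
    n ≤ ∑ a, min (b a) ((n + 1) / 2) := by
  have hindep (a : α) : (pathGraph n).IsIndepSet (({v | φ v = a} : Finset (Fin n)) : Set (Fin n)) :=
    fun u hu v hv _ huv => hφ u v huv (by simp_all)
  calc n = ∑ a, #{v | φ v = a} := by
        simpa using card_eq_sum_card_fiberwise (s := univ) (t := univ) fun v _ => mem_univ (φ v)
    _ ≤ ∑ a, min (b a) ((n + 1) / 2) :=
        sum_le_sum fun a _ => le_min (hb a) (card_le_of_isIndepSet_pathGraph (hindep a))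

section Blocks

variable (m : ℕ → ℕ)

/-- The index of the block containing `p`, when `ℕ` is cut into consecutive blocks of lengths
`m 0, m 1, …`. -/
noncomputable def blockOf (p : ℕ) : ℕ := sInf {j | p < ∑ i ∈ range (j + 1), m i}

variable {m}

lemma sum_range_blockOf_le (p : ℕ) : ∑ i ∈ range (blockOf m p), m i ≤ p := by
  rcases hj : blockOf m p with _ | j
  · simp
  · simpa using Nat.notMem_of_lt_sInf (show j < blockOf m p by omega)

lemma blockOf_lt {p N : ℕ} (hp : p < ∑ i ∈ range N, m i) : blockOf m p < N := by
  by_contra! hN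
  have := sum_le_sum_of_subset (f := m) (range_subset_range.2 hN)
  have := sum_range_blockOf_le (m := m) p
  omega

lemma lt_sum_range_blockOf_add {p N : ℕ} (hp : p < ∑ i ∈ range N, m i) :
    p < ∑ i ∈ range (blockOf m p), m i + m (blockOf m p) := by
  rw [← sum_range_succ]
  refine Nat.sInf_mem (s := {j | p < ∑ i ∈ range (j + 1), m i}) ⟨N, ?_⟩
  simpa [sum_range_succ] using Nat.lt_add_right _ hp

lemma blockOf_ne_of_add_le {h p q N : ℕ} (hm : ∀ j, m j ≤ h) (hq : q < ∑ i ∈ range N, m i)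
    (hpq : p + h ≤ q) : blockOf m p ≠ blockOf m q := by
  intro hj
  have hstart := sum_range_blockOf_le (m := m) p
  have hend := lt_sum_range_blockOf_add hq
  rw [← hj] at hend
  have := hm (blockOf m p)
  omega

/-- Two positions `h - 1` apart can only share a block of length `h` that starts at the first of
them; if the first block is a longest one, that block starts at or after `h`. -/
lemma blockOf_ne_of_add_eq {h p q N : ℕ} (hm : ∀ j, m j ≤ h) (hm₀ : ∀ j, m j ≤ m 0)
    (hq : q < ∑ i ∈ range N, m i) (hp : 0 < p) (hph : p < h) (hpq : q + 1 = p + h) :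
    blockOf m p ≠ blockOf m q := by
  intro hj
  have hstart := sum_range_blockOf_le (m := m) p
  have hend := lt_sum_range_blockOf_add hq
  rw [← hj] at hend
  have hj₀ : blockOf m p ≠ 0 := by
    intro h₀
    rw [h₀] at hend
    have := hm 0
    simp only [range_zero, sum_empty] at hend
    omega
  have hfirst : m 0 ≤ ∑ i ∈ range (blockOf m p), m i :=
    single_le_sum (fun _ _ => Nat.zero_le _) (mem_range.2 (Nat.pos_of_ne_zero hj₀))
  have := hm (blockOf m p)
  have := hm₀ (blockOf m p)
  omega

end Blocks

/-- The position of vertex `v` when the path is listed as `0, 2, 4, …, 1, 3, 5, …`, where `h` is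
the number of even vertices. -/
def pathPos (h v : ℕ) : ℕ := if v % 2 = 0 then v / 2 else h + v / 2

lemma pathPos_lt {n v : ℕ} (hv : v < n) : pathPos ((n + 1) / 2) v < n := by
  unfold pathPos
  split_ifs <;> omega

lemma pathPos_injOn (h : ℕ) : Set.InjOn (pathPos h) (Set.Iio (2 * h)) := by
  intro u hu v hv huv
  simp only [Set.mem_Iio] at hu hv
  unfold pathPos at huv
  split_ifs at huv <;> omega

lemma pathPos_succ {h u : ℕ} (hu : u + 1 < 2 * h) :
    pathPos h u + h = pathPos h (u + 1) ∨
      0 < pathPos h (u + 1) ∧ pathPos h (u + 1) < h ∧ pathPos h u + 1 = pathPos h (u + 1) + h := by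
  unfold pathPos
  split_ifs <;> omega

lemma exists_pathGraph_coloring_of_blocks (m : ℕ → ℕ) {n N : ℕ}
    (hN : n ≤ ∑ i ∈ range N, m i) (hm : ∀ j, m j ≤ (n + 1) / 2) (hm₀ : ∀ j, m j ≤ m 0) :
    ∃ g : Fin n → Fin N, (∀ u v, (pathGraph n).Adj u v → g u ≠ g v) ∧
      ∀ j, #{v | g v = j} ≤ m j := by
  set h := (n + 1) / 2
  have hpos (v : Fin n) : pathPos h v < ∑ i ∈ range N, m i := (pathPos_lt v.isLt).trans_le hN
  let g : Fin n → Fin N := fun v => ⟨blockOf m (pathPos h v), blockOf_lt (hpos v)⟩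
  refine ⟨g, ?_, fun j => ?_⟩
  · have hsucc (u v : Fin n) (huv : u.val + 1 = v.val) : g u ≠ g v := by
      intro hg
      replace hg : blockOf m (pathPos h u) = blockOf m (pathPos h v) := Fin.val_eq_of_eq hg
      have hv := hpos v
      rw [← huv] at hv hg
      rcases pathPos_succ (h := h) (u := u) (by omega) with hgap | ⟨hv₀, hvh, hgap⟩
      · exact blockOf_ne_of_add_le hm hv hgap.le hg
      · exact blockOf_ne_of_add_eq hm hm₀ (hpos u) hv₀ hvh hgap hg.symm
    intro u v huv
    rcases pathGraph_adj.1 huv with huv | huv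
    · exact hsucc u v huv
    · exact (hsucc v u huv).symm
  · have hmaps : ∀ v ∈ ({v | g v = j} : Finset (Fin n)),
        pathPos h v ∈ Ico (∑ i ∈ range j, m i) (∑ i ∈ range j, m i + m j) := by
      intro v hv
      have hj : blockOf m (pathPos h v) = j := congrArg Fin.val (mem_filter.1 hv).2
      rw [mem_Ico, ← hj]
      exact ⟨sum_range_blockOf_le _, lt_sum_range_blockOf_add (hpos v)⟩
    have hinj : Function.Injective (fun v : Fin n => pathPos h v) := fun u v huv =>
      Fin.ext (pathPos_injOn h (Set.mem_Iio.2 (by omega)) (Set.mem_Iio.2 (by omega)) huv)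
    simpa using card_le_card_of_injOn _ hmaps hinj.injOn

theorem exists_pathGraph_coloring_of_le_sum_min {n c : ℕ} (b : Fin c → ℕ)
    (hb : n ≤ ∑ i, min (b i) ((n + 1) / 2)) :
    ∃ φ : Fin n → Fin c, (∀ u v, (pathGraph n).Adj u v → φ u ≠ φ v) ∧
      ∀ i, #{v | φ v = i} ≤ b i := by
  set M : Fin c → ℕ := fun i => min (b i) ((n + 1) / 2)
  set σ := Tuple.sort (OrderDual.toDual ∘ M)
  have hanti : Antitone (M ∘ σ) := Tuple.monotone_sort (OrderDual.toDual ∘ M)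
  set m : ℕ → ℕ := fun j => if hj : j < c then M (σ ⟨j, hj⟩) else 0
  have hm_fin (i : Fin c) : m i = M (σ i) := by simp [m]
  have hm (j : ℕ) : m j ≤ (n + 1) / 2 := by
    unfold m
    split_ifs <;> simp [M]
  have hm₀ (j : ℕ) : m j ≤ m 0 := by
    unfold m
    split_ifs with hj hc
    · exact hanti (Fin.mk_le_mk.2 (Nat.zero_le j))
    · omega
    all_goals exact Nat.zero_le _
  have hN : n ≤ ∑ i ∈ range c, m i := by
    rwa [← Fin.sum_univ_eq_sum_range, Finset.sum_congr rfl fun i _ => hm_fin i,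
      Equiv.sum_comp σ M]
  obtain ⟨g, hg, hcard⟩ := exists_pathGraph_coloring_of_blocks m hN hm hm₀
  refine ⟨σ ∘ g, fun u v huv => σ.injective.ne (hg u v huv), fun i => ?_⟩
  calc #{v | σ (g v) = i} = #{v | g v = σ.symm i} := by simp_rw [← Equiv.eq_symm_apply]
    _ ≤ m (σ.symm i) := hcard _
    _ ≤ b i := by rw [hm_fin, Equiv.apply_symm_apply]; exact min_le_left _ _

theorem stmt10_general (n c : ℕ) (b : Fin c → ℕ) :
    (∃ φ : Fin n → Fin c,
      (∀ u v, (SimpleGraph.pathGraph n).Adj u v → φ u ≠ φ v) ∧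
      ∀ i, (univ.filter fun v => φ v = i).card ≤ b i) ↔
    n ≤ ∑ i, min (b i) ((n + 1) / 2) :=
  ⟨fun ⟨φ, hφ, hb⟩ => le_sum_min_of_pathGraph_coloring b φ hφ hb,
    exists_pathGraph_coloring_of_le_sum_min b⟩

theorem stmt10 (n c : ℕ) (hn : 1 ≤ n) (hc : 2 ≤ n → 2 ≤ c) (b : Fin c → ℕ) :
    (∃ φ : Fin n → Fin c,
      (∀ u v, (SimpleGraph.pathGraph n).Adj u v → φ u ≠ φ v) ∧
      ∀ i, (univ.filter fun v => φ v = i).card ≤ b i) ↔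
    n ≤ ∑ i, min (b i) ((n + 1) / 2) :=
  stmt10_general n c b
end

section
/- Let U be a finite set of size n, F a family of subsets of U, c ≥ 1, and budgets b_1,...,b_c. For W ⊆ U and i, let f(W, b_i) be the number of sets in F of size at most b_i that are disjoint from W. Then the number of ordered tuples (F_1,...,F_c) ∈ F^c with |F_i| ≤ b_i for all i and F_1 ∪ ... ∪ F_c = U equals Σ_{W ⊆ U} (−1)^{|W|} · Π_{i=1}^c f(W, b_i). -/
open Finset

theorem stmt14 {α : Type*} [Fintype α] [DecidableEq α] (n : ℕ)
    (hn : Fintype.card α = n) (F : Finset (Finset α)) (c : ℕ) (hc : 1 ≤ c)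
    (b : Fin c → ℕ) :
    (((univ : Finset (Fin c → Finset α)).filter fun t =>
        (∀ i, t i ∈ F ∧ (t i).card ≤ b i) ∧ univ.biUnion t = univ).card : ℤ) =
    ∑ W : Finset α, (-1 : ℤ) ^ W.card *
      ∏ i, ((F.filter fun s => s.card ≤ b i ∧ Disjoint s W).card : ℤ) := by
  classical
  have h1 : ∀ W : Finset α,
      (∏ i, ((F.filter fun s => s.card ≤ b i ∧ Disjoint s W).card : ℤ)) =
      ∑ t : Fin c → Finset α,
        (if (∀ i, t i ∈ F ∧ (t i).card ≤ b i) ∧ (∀ i, Disjoint (t i) W)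
          then (1:ℤ) else 0) := by
    intro W
    rw [Finset.sum_boole]
    have he : (univ.filter fun t : Fin c → Finset α =>
        (∀ i, t i ∈ F ∧ (t i).card ≤ b i) ∧ ∀ i, Disjoint (t i) W)
        = Fintype.piFinset fun i => F.filter fun s => s.card ≤ b i ∧ Disjoint s W := by
      ext t
      simp only [mem_filter, mem_univ, true_and, Fintype.mem_piFinset, forall_and]
      tauto
    rw [he, Fintype.card_piFinset]
    push_cast
    rfl
  simp_rw [h1, Finset.mul_sum]
  rw [Finset.sum_comm]
  have h2 : ∀ t : Fin c → Finset α,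
      (∑ W : Finset α, (-1:ℤ)^W.card *
        (if (∀ i, t i ∈ F ∧ (t i).card ≤ b i) ∧ (∀ i, Disjoint (t i) W)
          then (1:ℤ) else 0)) =
      (if (∀ i, t i ∈ F ∧ (t i).card ≤ b i) ∧ univ.biUnion t = univ
        then (1:ℤ) else 0) := by
    intro t
    by_cases hP : ∀ i, t i ∈ F ∧ (t i).card ≤ b i
    · simp only [eq_true hP, true_and, mul_ite, mul_one, mul_zero]
      have hd : ∀ W : Finset α, (∀ i, Disjoint (t i) W) ↔ W ⊆ (univ.biUnion t)ᶜ := by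
        intro W
        simp only [Finset.subset_iff, Finset.mem_compl, Finset.mem_biUnion,
          Finset.disjoint_left, not_exists, not_and]
        constructor
        · intro h x hx i _
          exact fun hxi => h i hxi hx
        · intro h i x hxi hxW
          exact h hxW i (mem_univ i) hxi
      simp_rw [hd]
      rw [← Finset.sum_filter]
      have hf : univ.filter (fun W : Finset α => W ⊆ (univ.biUnion t)ᶜ)
          = ((univ.biUnion t)ᶜ).powerset := by
        ext W; simp
      rw [hf, Finset.sum_powerset_neg_one_pow_card]
      congr 1
      simp [Finset.compl_eq_empty_iff]
    · simp [hP]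
  simp_rw [h2]
  rw [Finset.sum_boole]
end

section
/- A graph G on n vertices admits a proper c-coloring with color i used at most b_i times if and only if Σ_{W ⊆ V(G)} (−1)^{|W|} · Π_{i=1}^c f(W, b_i) > 0, where f(W, b_i) is the number of independent sets of G of size at most b_i that are disjoint from W. -/
open Finset

theorem stmt15 {V : Type*} [Fintype V] [DecidableEq V] (G : SimpleGraph V)
    [DecidableRel G.Adj] (c : ℕ) (b : Fin c → ℕ) :
    (∃ φ : V → Fin c, (∀ u v, G.Adj u v → φ u ≠ φ v) ∧
      ∀ i, (univ.filter fun v => φ v = i).card ≤ b i) ↔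
    0 < ∑ W : Finset V, (-1 : ℤ) ^ W.card *
      ∏ i, (((univ : Finset (Finset V)).filter fun s =>
        (∀ u ∈ s, ∀ v ∈ s, ¬ G.Adj u v) ∧ s.card ≤ b i ∧
          Disjoint s W).card : ℤ) := by
  classical
  have key : (∑ W : Finset V, (-1 : ℤ) ^ W.card *
      ∏ i, (((univ : Finset (Finset V)).filter fun s =>
        (∀ u ∈ s, ∀ v ∈ s, ¬ G.Adj u v) ∧ s.card ≤ b i ∧
          Disjoint s W).card : ℤ))
      = ((univ.filter fun t : Fin c → Finset V =>
          (∀ i, (∀ u ∈ t i, ∀ v ∈ t i, ¬ G.Adj u v) ∧ (t i).card ≤ b i)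
          ∧ ∀ v, ∃ i, v ∈ t i).card : ℤ) := by
    have step1 : ∀ W : Finset V,
        (∏ i, (((univ : Finset (Finset V)).filter fun s =>
          (∀ u ∈ s, ∀ v ∈ s, ¬ G.Adj u v) ∧ s.card ≤ b i ∧ Disjoint s W).card : ℤ))
        = ∑ t : Fin c → Finset V,
            if (∀ i, (∀ u ∈ t i, ∀ v ∈ t i, ¬ G.Adj u v) ∧ (t i).card ≤ b i ∧
                Disjoint (t i) W) then (1 : ℤ) else 0 := by
      intro W
      rw [Finset.sum_boole, ← Nat.cast_prod]
      congr 1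
      have : (univ.filter fun t : Fin c → Finset V =>
          ∀ i, (∀ u ∈ t i, ∀ v ∈ t i, ¬ G.Adj u v) ∧ (t i).card ≤ b i ∧
            Disjoint (t i) W)
          = Fintype.piFinset (fun i => (univ : Finset (Finset V)).filter fun s =>
            (∀ u ∈ s, ∀ v ∈ s, ¬ G.Adj u v) ∧ s.card ≤ b i ∧ Disjoint s W) := by
        ext t
        simp [Fintype.mem_piFinset]
      rw [this, Fintype.card_piFinset]
    calc (∑ W : Finset V, (-1 : ℤ) ^ W.card *
        ∏ i, (((univ : Finset (Finset V)).filter fun s =>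
          (∀ u ∈ s, ∀ v ∈ s, ¬ G.Adj u v) ∧ s.card ≤ b i ∧ Disjoint s W).card : ℤ))
        = ∑ t : Fin c → Finset V, ∑ W : Finset V,
            (-1 : ℤ) ^ W.card * (if (∀ i, (∀ u ∈ t i, ∀ v ∈ t i, ¬ G.Adj u v) ∧
              (t i).card ≤ b i ∧ Disjoint (t i) W) then (1 : ℤ) else 0) := by
          rw [Finset.sum_comm]
          exact Finset.sum_congr rfl fun W _ => by rw [step1 W, Finset.mul_sum]
      _ = ∑ t : Fin c → Finset V,
            (if (∀ i, (∀ u ∈ t i, ∀ v ∈ t i, ¬ G.Adj u v) ∧ (t i).card ≤ b i)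
              ∧ ∀ v, ∃ i, v ∈ t i then (1 : ℤ) else 0) := by
          refine Finset.sum_congr rfl fun t _ => ?_
          by_cases hP : ∀ i, (∀ u ∈ t i, ∀ v ∈ t i, ¬ G.Adj u v) ∧ (t i).card ≤ b i
          · have hcond : ∀ W : Finset V,
                (∀ i, (∀ u ∈ t i, ∀ v ∈ t i, ¬ G.Adj u v) ∧ (t i).card ≤ b i ∧
                  Disjoint (t i) W) ↔ W ⊆ (univ.biUnion t)ᶜ := by
              intro W
              constructor
              · intro h
                intro x hx
                simp only [Finset.mem_compl, Finset.mem_biUnion, Finset.mem_univ,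
                  true_and, not_exists]
                intro i hxi
                exact (Finset.disjoint_left.mp (h i).2.2) hxi hx
              · intro h i
                refine ⟨(hP i).1, (hP i).2, Finset.disjoint_left.mpr fun x hxi hxW => ?_⟩
                have := h hxW
                simp only [Finset.mem_compl, Finset.mem_biUnion, Finset.mem_univ,
                  true_and, not_exists] at this
                exact this i hxi
            have : (∑ W : Finset V, (-1 : ℤ) ^ W.card *
                (if (∀ i, (∀ u ∈ t i, ∀ v ∈ t i, ¬ G.Adj u v) ∧ (t i).card ≤ b i ∧
                  Disjoint (t i) W) then (1 : ℤ) else 0))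
                = ∑ W ∈ ((univ.biUnion t)ᶜ).powerset, (-1 : ℤ) ^ W.card := by
              rw [← Finset.sum_filter_add_sum_filter_not univ
                (fun W => W ⊆ (univ.biUnion t)ᶜ)]
              have h1 : ∀ W ∈ univ.filter (fun W : Finset V => W ⊆ (univ.biUnion t)ᶜ),
                  (-1 : ℤ) ^ W.card * (if (∀ i, (∀ u ∈ t i, ∀ v ∈ t i, ¬ G.Adj u v) ∧
                    (t i).card ≤ b i ∧ Disjoint (t i) W) then (1 : ℤ) else 0)
                  = (-1 : ℤ) ^ W.card := by
                intro W hW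
                rw [Finset.mem_filter] at hW
                rw [if_pos ((hcond W).mpr hW.2), mul_one]
              have h2 : ∀ W ∈ univ.filter (fun W : Finset V => ¬ W ⊆ (univ.biUnion t)ᶜ),
                  (-1 : ℤ) ^ W.card * (if (∀ i, (∀ u ∈ t i, ∀ v ∈ t i, ¬ G.Adj u v) ∧
                    (t i).card ≤ b i ∧ Disjoint (t i) W) then (1 : ℤ) else 0) = 0 := by
                intro W hW
                rw [Finset.mem_filter] at hW
                rw [if_neg (fun h => hW.2 ((hcond W).mp h)), mul_zero]
              rw [Finset.sum_congr rfl h1, Finset.sum_congr rfl h2, Finset.sum_const_zero,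
                add_zero]
              congr 1
              ext W
              simp [Finset.mem_powerset]
            rw [this, Finset.sum_powerset_neg_one_pow_card]
            have hempty : ((univ.biUnion t)ᶜ = (∅ : Finset V)) ↔ ∀ v, ∃ i, v ∈ t i := by
              rw [Finset.compl_eq_empty_iff, Finset.eq_univ_iff_forall]
              simp
            by_cases hcov : ∀ v, ∃ i, v ∈ t i
            · rw [if_pos (hempty.mpr hcov), if_pos ⟨hP, hcov⟩]
            · rw [if_neg (fun h => hcov (hempty.mp h)), if_neg (fun h => hcov h.2)]
          · have h0 : ∀ W : Finset V,
                (-1 : ℤ) ^ W.card * (if (∀ i, (∀ u ∈ t i, ∀ v ∈ t i, ¬ G.Adj u v) ∧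
                  (t i).card ≤ b i ∧ Disjoint (t i) W) then (1 : ℤ) else 0) = 0 := by
              intro W
              rw [if_neg, mul_zero]
              intro h
              exact hP fun i => ⟨(h i).1, (h i).2.1⟩
            rw [Finset.sum_congr rfl (fun W _ => h0 W), Finset.sum_const_zero,
              if_neg (fun h => hP h.1)]
      _ = ((univ.filter fun t : Fin c → Finset V =>
          (∀ i, (∀ u ∈ t i, ∀ v ∈ t i, ¬ G.Adj u v) ∧ (t i).card ≤ b i)
          ∧ ∀ v, ∃ i, v ∈ t i).card : ℤ) := by rw [Finset.sum_boole]
  rw [key]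
  rw [Int.lt_iff_add_one_le, zero_add, Nat.one_le_cast, Nat.one_le_iff_ne_zero,
    ← Nat.pos_iff_ne_zero, Finset.card_pos]
  constructor
  · rintro ⟨φ, hadj, hcard⟩
    refine ⟨fun i => univ.filter fun v => φ v = i, Finset.mem_filter.mpr
      ⟨Finset.mem_univ _, ⟨fun i => ⟨?_, hcard i⟩, fun v => ⟨φ v, by simp⟩⟩⟩⟩
    intro u hu v hv hAdj
    rw [Finset.mem_filter] at hu hv
    exact hadj u v hAdj (hu.2.trans hv.2.symm)
  · rintro ⟨t, ht⟩
    rw [Finset.mem_filter] at ht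
    obtain ⟨-, hP, hcov⟩ := ht
    refine ⟨fun v => (hcov v).choose, ?_, ?_⟩
    · intro u v hAdj huv
      have huv' : (hcov u).choose = (hcov v).choose := huv
      have hvmem := (hcov v).choose_spec
      rw [← huv'] at hvmem
      exact (hP (hcov u).choose).1 u (hcov u).choose_spec v hvmem hAdj
    · intro i
      refine le_trans (Finset.card_le_card ?_) (hP i).2
      intro v hv
      rw [Finset.mem_filter] at hv
      exact hv.2 ▸ (hcov v).choose_spec
end

section
/- Let G be a graph, S a cluster vertex deletion set (G − S is a disjoint union of cliques K_1,...,K_m), and α a proper coloring of G[S] with color classes P_1,...,P_ℓ. Then G admits a proper budgeted coloring extending α (color i used at most b_i times overall) if and only if the following bipartite-like flow network has an (s,t)-flow of value n − |S|: source s connects to a vertex v_i for each used color class P_i with capacity b_i − |P_i| and to a vertex v_a for each unused color a with capacity b_a; each v_i connects through intermediate unit-capacity vertices u_{ij} (one per clique K_j) to those vertices w ∈ K_j for which P_i ∪ {w} is independent in G (or to all of K_j when color i is unused in α); and every vertex of every clique connects to sink t with capacity 1. -/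
open Finset

theorem stmt17 {V : Type*} [Fintype V] [DecidableEq V] (G : SimpleGraph V)
    [DecidableRel G.Adj]
    (n k c m : ℕ) (hn : Fintype.card V = n)
    -- `S` is a cluster vertex deletion set of size `k`; `κ` assigns to each
    -- vertex its clique in `G - S`
    (S : Finset V) (hk : S.card = k)
    (κ : V → Fin m)
    (hclust : ∀ u v : V, u ∉ S → v ∉ S → u ≠ v → (G.Adj u v ↔ κ u = κ v))
    -- `α` is a proper coloring of `G[S]`
    (α : V → Fin c)
    (hα : ∀ u ∈ S, ∀ v ∈ S, G.Adj u v → α u ≠ α v)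
    (b : Fin c → ℕ) :
    -- a proper budgeted coloring of `G` extending `α` exists iff the flow
    -- network has an (integral) `(s,t)`-flow of value `n - k`:
    -- `f1 i` is the flow on the edge from `s` to the color node `vᵢ`
    -- (capacity `b i - |α⁻¹(i) ∩ S|`), `f2 i j` the flow from `vᵢ` to the
    -- unit-capacity node `u_{ij}`, and `f3 i j w` the flow from `u_{ij}` to
    -- the clique vertex `w` (present only when `w ∉ S`, `w ∈ K_j`, and
    -- `P_i ∪ {w}` is independent); each clique vertex has capacity 1 to `t`.
    (∃ β : V → Fin c, (∀ u v, G.Adj u v → β u ≠ β v) ∧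
      (∀ i, (univ.filter fun v => β v = i).card ≤ b i) ∧
      (∀ v ∈ S, β v = α v)) ↔
    (∃ (f1 : Fin c → ℕ) (f2 : Fin c → Fin m → ℕ) (f3 : Fin c → Fin m → V → ℕ),
      (∀ i, f1 i + (S.filter fun v => α v = i).card ≤ b i) ∧
      (∀ i j, f2 i j ≤ 1) ∧
      (∀ i j w, f3 i j w ≤ 1) ∧
      (∀ i j w, f3 i j w ≠ 0 → w ∉ S ∧ κ w = j ∧
        ∀ x ∈ S, α x = i → ¬ G.Adj x w) ∧
      (∀ i, f1 i = ∑ j, f2 i j) ∧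
      (∀ i j, f2 i j = ∑ w, f3 i j w) ∧
      (∀ w, (∑ i, ∑ j, f3 i j w) ≤ 1) ∧
      (∑ i, f1 i) = n - k) := by
  classical
  have hcompl : Sᶜ.card = n - k := by rw [Finset.card_compl, hn, hk]
  constructor
  · rintro ⟨β, hβprop, hβbud, hβext⟩
    set F3 : Fin c → Fin m → V → ℕ :=
      fun i j w => if w ∉ S ∧ κ w = j ∧ β w = i then 1 else 0 with hF3
    refine ⟨fun i => ∑ j, ∑ w, F3 i j w, fun i j => ∑ w, F3 i j w, F3, ?_, ?_, ?_, ?_,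
      fun i => rfl, fun i j => rfl, ?_, ?_⟩
    · -- budget
      intro i
      dsimp only
      have h1 : ∑ j, ∑ w, F3 i j w = (univ.filter fun w => w ∉ S ∧ β w = i).card := by
        rw [Finset.sum_comm, Finset.card_filter]
        refine Finset.sum_congr rfl fun w _ => ?_
        by_cases hw : w ∈ S
        · simp [hF3, hw]
        · by_cases hb : β w = i
          · simp [hF3, hw, hb, ite_and, Finset.sum_ite_eq]
          · simp [hF3, hw, hb]
      have h2 : (S.filter fun v => α v = i) = univ.filter fun v => v ∈ S ∧ β v = i := by
        ext v
        simp only [Finset.mem_filter, Finset.mem_univ, true_and]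
        constructor
        · rintro ⟨hv, ha⟩; exact ⟨hv, by rw [hβext v hv, ha]⟩
        · rintro ⟨hv, ha⟩; exact ⟨hv, by rw [← hβext v hv, ha]⟩
      have h3 : (univ.filter fun w => w ∉ S ∧ β w = i).card
          + (univ.filter fun v => v ∈ S ∧ β v = i).card
          = (univ.filter fun v => β v = i).card := by
        rw [Finset.card_filter, Finset.card_filter, Finset.card_filter,
          ← Finset.sum_add_distrib]
        refine Finset.sum_congr rfl fun v _ => ?_
        by_cases hv : v ∈ S <;> by_cases hb : β v = i <;> simp [hv, hb]
      rw [h1, h2, h3]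
      exact hβbud i
    · -- f2 ≤ 1
      intro i j
      dsimp only
      have h1 : ∑ w, F3 i j w = (univ.filter fun w => w ∉ S ∧ κ w = j ∧ β w = i).card := by
        rw [Finset.card_filter]
      rw [h1]
      refine Finset.card_le_one.2 fun a ha b hb => ?_
      simp only [Finset.mem_filter, Finset.mem_univ, true_and] at ha hb
      by_contra hab
      have hadj : G.Adj a b := (hclust a b ha.1 hb.1 hab).2 (ha.2.1.trans hb.2.1.symm)
      exact hβprop a b hadj (ha.2.2.trans hb.2.2.symm)
    · intro i j w; simp only [hF3]; split_ifs <;> omega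
    · -- support
      intro i j w h
      by_cases hc : w ∉ S ∧ κ w = j ∧ β w = i
      swap
      · exact absurd (by simp [hF3, hc]) h
      obtain ⟨hw, hκ, hb⟩ := hc
      refine ⟨hw, hκ, fun x hx hax hadj => ?_⟩
      have : β x = α x := hβext x hx
      exact hβprop x w hadj (by rw [this, hax, hb])
    · -- capacity into t
      intro w
      by_cases hw : w ∈ S
      · simp [hF3, hw]
      · have : ∑ i, ∑ j, F3 i j w = 1 := by
          simp [hF3, hw, ite_and, Finset.sum_ite_eq]
        omega
    · -- total value
      have : ∑ i, ∑ j, ∑ w, F3 i j w = ∑ w : V, ∑ i, ∑ j, F3 i j w :=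
        calc ∑ i, ∑ j, ∑ w, F3 i j w = ∑ i, ∑ w : V, ∑ j, F3 i j w :=
              Finset.sum_congr rfl fun i _ => Finset.sum_comm
          _ = ∑ w : V, ∑ i, ∑ j, F3 i j w := Finset.sum_comm
      rw [this]
      have h2 : ∀ w : V, ∑ i, ∑ j, F3 i j w = if w ∈ S then 0 else 1 := by
        intro w
        by_cases hw : w ∈ S
        · simp [hF3, hw]
        · simp [hF3, hw, ite_and, Finset.sum_ite_eq]
      calc ∑ w : V, ∑ i, ∑ j, F3 i j w = ∑ w : V, if w ∈ S then 0 else 1 :=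
            Finset.sum_congr rfl fun w _ => h2 w
        _ = (univ.filter fun w => w ∉ S).card := by
            rw [Finset.card_filter]
            exact Finset.sum_congr rfl fun w _ => by by_cases hw : w ∈ S <;> simp [hw]
        _ = Sᶜ.card := by congr 1; ext x; simp
        _ = n - k := hcompl
  · rintro ⟨f1, f2, f3, hb1, hb2, hb3, hsupp, he1, he2, hw1, htot⟩
    have htS : ∀ w ∈ S, ∑ i, ∑ j, f3 i j w = 0 := by
      intro w hw
      refine Finset.sum_eq_zero fun i _ => Finset.sum_eq_zero fun j _ => ?_
      by_contra h
      exact (hsupp i j w h).1 hw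
    have hsum_all : ∑ w : V, ∑ i, ∑ j, f3 i j w = n - k := by
      rw [← htot]
      rw [Finset.sum_comm]
      refine (Finset.sum_congr rfl fun i _ => ?_).symm
      rw [he1 i, Finset.sum_comm]
      exact Finset.sum_congr rfl fun j _ => he2 i j
    have hsum_compl : ∑ w ∈ Sᶜ, ∑ i, ∑ j, f3 i j w = Sᶜ.card := by
      rw [hcompl, ← hsum_all, ← Finset.sum_compl_add_sum S fun w => ∑ i, ∑ j, f3 i j w]
      rw [Finset.sum_eq_zero htS, add_zero]
    have hone : ∀ w ∉ S, ∑ i, ∑ j, f3 i j w = 1 := by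
      intro w hw
      by_contra h
      have hz : ∑ i, ∑ j, f3 i j w = 0 := by have := hw1 w; omega
      have hmem : w ∈ Sᶜ := Finset.mem_compl.2 hw
      have h1 : ∑ x ∈ Sᶜ, ∑ i, ∑ j, f3 i j x
          = ∑ i, ∑ j, f3 i j w + ∑ x ∈ Sᶜ.erase w, ∑ i, ∑ j, f3 i j x :=
        (Finset.add_sum_erase _ _ hmem).symm
      have h2 : ∑ x ∈ Sᶜ.erase w, ∑ i, ∑ j, f3 i j x ≤ (Sᶜ.erase w).card := by
        calc ∑ x ∈ Sᶜ.erase w, ∑ i, ∑ j, f3 i j x ≤ (Sᶜ.erase w).card • 1 :=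
              Finset.sum_le_card_nsmul _ _ 1 fun x _ => hw1 x
          _ = (Sᶜ.erase w).card := by simp
      have h3 : (Sᶜ.erase w).card = Sᶜ.card - 1 := Finset.card_erase_of_mem hmem
      have h4 : 1 ≤ Sᶜ.card := Finset.card_pos.2 ⟨w, hmem⟩
      omega
    have hex : ∀ w, w ∉ S → ∃ i j, f3 i j w ≠ 0 := by
      intro w hw
      by_contra h
      push_neg at h
      have := hone w hw
      simp [h] at this
    set β : V → Fin c := fun w => if hw : w ∈ S then α w else
      Classical.choose (hex w hw) with hβ
    have hβS : ∀ v ∈ S, β v = α v := fun v hv => dif_pos hv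
    have hβ3 : ∀ w, (hw : w ∉ S) → f3 (β w) (κ w) w ≠ 0 := by
      intro w hw
      have hch : β w = Classical.choose (hex w hw) := dif_neg hw
      obtain ⟨j, hj⟩ := Classical.choose_spec (hex w hw)
      have hjj := (hsupp _ j w hj).2.1
      rw [hch, hjj]
      exact hj
    refine ⟨β, ?_, ?_, hβS⟩
    · -- properness
      have key : ∀ u v, G.Adj u v → u ∈ S → v ∉ S → β u ≠ β v := by
        intro u v hadj hu hv heq
        have h3 := hβ3 v hv
        have := (hsupp (β v) (κ v) v h3).2.2 u hu
        rw [hβS u hu] at heq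
        exact this heq hadj
      intro u v hadj
      have hne : u ≠ v := G.ne_of_adj hadj
      by_cases hu : u ∈ S <;> by_cases hv : v ∈ S
      · rw [hβS u hu, hβS v hv]; exact hα u hu v hv hadj
      · exact key u v hadj hu hv
      · exact fun heq => (key v u hadj.symm hv hu) heq.symm
      · intro heq
        have hκ : κ u = κ v := (hclust u v hu hv hne).1 hadj
        have h3u := hβ3 u hu
        have h3v := hβ3 v hv
        rw [heq, hκ] at h3u
        have : f3 (β v) (κ v) u + f3 (β v) (κ v) v ≤ ∑ w, f3 (β v) (κ v) w := by
          rw [← Finset.sum_pair hne]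
          exact Finset.sum_le_sum_of_subset (Finset.subset_univ _)
        have hle := hb2 (β v) (κ v)
        rw [he2 (β v) (κ v)] at hle
        omega
    · -- budget
      intro i
      have h3 : (univ.filter fun v => β v = i).card
          = (univ.filter fun w => w ∉ S ∧ β w = i).card
            + (univ.filter fun v => v ∈ S ∧ β v = i).card := by
        rw [Finset.card_filter, Finset.card_filter, Finset.card_filter,
          ← Finset.sum_add_distrib]
        refine Finset.sum_congr rfl fun v _ => ?_
        by_cases hv : v ∈ S <;> by_cases hb : β v = i <;> simp [hv, hb]
      have h2 : (univ.filter fun v => v ∈ S ∧ β v = i) = S.filter fun v => α v = i := by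
        ext v
        simp only [Finset.mem_filter, Finset.mem_univ, true_and]
        constructor
        · rintro ⟨hv, ha⟩; exact ⟨hv, by rw [← hβS v hv, ha]⟩
        · rintro ⟨hv, ha⟩; exact ⟨hv, by rw [hβS v hv, ha]⟩
      have h1 : (univ.filter fun w => w ∉ S ∧ β w = i).card ≤ f1 i := by
        rw [he1 i]
        have hswap : ∑ j, f2 i j = ∑ w : V, ∑ j, f3 i j w := by
          rw [Finset.sum_comm]
          exact Finset.sum_congr rfl fun j _ => he2 i j
        rw [hswap]
        calc (univ.filter fun w => w ∉ S ∧ β w = i).card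
            = ∑ w ∈ univ.filter fun w => w ∉ S ∧ β w = i, 1 := by simp
          _ ≤ ∑ w ∈ univ.filter fun w => w ∉ S ∧ β w = i, ∑ j, f3 i j w := by
              refine Finset.sum_le_sum fun w hw => ?_
              simp only [Finset.mem_filter, Finset.mem_univ, true_and] at hw
              have h3w := hβ3 w hw.1
              rw [hw.2] at h3w
              calc 1 ≤ f3 i (κ w) w := by omega
                _ ≤ ∑ j, f3 i j w :=
                    Finset.single_le_sum (f := fun j => f3 i j w)
                      (fun j _ => Nat.zero_le _) (Finset.mem_univ (κ w))
          _ ≤ ∑ w : V, ∑ j, f3 i j w :=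
              Finset.sum_le_sum_of_subset (Finset.filter_subset _ _)
      rw [h3, h2]
      have := hb1 i
      omega
end
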